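/- arXiv:1508.02464 — 4 statements merged into one kernel-verified Lean document; each statement's English description precedes it below -/
import Mathlib

section
/- For every n ≥ 0, the denominator of b n is not divisible by 3. Moreover, for every n with 9 ∣ n and every i with 0 ≤ i ≤ 8, one has b (n+i) ≡ r i (mod 3), where (r 0, …, r 8) = (1, 1, 2, 1, 0, 2, 1, 2, 2); here a rational q whose denominator is prime to 3 satisfies q ≡ r (mod 3) if 3 divides q.num − r · q.den. -/
/-!
Work in the `3`-adic integers. If `b n, …, b (n + 3)` are `3`-integral and the residue of `b n` is
nonzero, then `b n` is a `3`-adic unit and the recurrence makes `b (n + 4)` `3`-integral with a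
residue computed in `ZMod 3`; a finite check shows that the period-`9` pattern propagates. The
pattern vanishes only at `n ≡ 4 (mod 9)`; the step past such a zero uses instead the five-term
relation `b (n + 5) b n = c (n + 6) b (n + 4) b (n + 1) + b (n + 3) b (n + 2)`, which the recurrence
implies as long as no term vanishes. No term vanishes because the same argument modulo `5` gives
residues of period `24` that are never zero.
-/

/-- The ECHO sequence. -/
def echo : ℕ → ℚ
  | 0 => 1
  | 1 => 1
  | 2 => 2
  | 3 => 1
  | n + 4 =>
      (echo (n + 3) * echo (n + 1) - (if 3 ∣ (n + 4) then 3 else 1) * echo (n + 2) ^ 2) /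
        echo n

/-- The residues (1, 1, 2, 1, 0, 2, 1, 2, 2). -/
def rseq : ℕ → ℤ := fun i => ([1, 1, 2, 1, 0, 2, 1, 2, 2] : List ℤ).getD i 0

def HasResidue (p : ℕ) [Fact p.Prime] (q : ℚ) (r : ZMod p) : Prop :=
  ∃ x : ℤ_[p], (x : ℚ_[p]) = q ∧ PadicInt.toZMod x = r

namespace HasResidue

variable {p : ℕ} [Fact p.Prime] {q q' : ℚ} {r r' : ZMod p}

theorem natCast (k : ℕ) : HasResidue p k k := ⟨k, by simp, by simp⟩

theorem add (h : HasResidue p q r) (h' : HasResidue p q' r') :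
    HasResidue p (q + q') (r + r') := by
  obtain ⟨x, hx, rfl⟩ := h
  obtain ⟨x', hx', rfl⟩ := h'
  exact ⟨x + x', by simp [hx, hx'], map_add _ _ _⟩

theorem sub (h : HasResidue p q r) (h' : HasResidue p q' r') :
    HasResidue p (q - q') (r - r') := by
  obtain ⟨x, hx, rfl⟩ := h
  obtain ⟨x', hx', rfl⟩ := h'
  exact ⟨x - x', by simp [hx, hx'], map_sub _ _ _⟩

theorem mul (h : HasResidue p q r) (h' : HasResidue p q' r') :
    HasResidue p (q * q') (r * r') := by
  obtain ⟨x, hx, rfl⟩ := h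
  obtain ⟨x', hx', rfl⟩ := h'
  exact ⟨x * x', by simp [hx, hx'], map_mul _ _ _⟩

theorem pow (h : HasResidue p q r) (n : ℕ) : HasResidue p (q ^ n) (r ^ n) := by
  obtain ⟨x, hx, rfl⟩ := h
  exact ⟨x ^ n, by simp [hx], map_pow _ _ _⟩

theorem div (h : HasResidue p q r) (h' : HasResidue p q' r') (hr' : r' ≠ 0) :
    HasResidue p (q / q') (r / r') := by
  obtain ⟨x, hx, rfl⟩ := h
  obtain ⟨x', hx', rfl⟩ := h'
  -- a residue outside the maximal ideal makes `x'` a unit of `ℤ_[p]`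
  obtain ⟨u, rfl⟩ : IsUnit x' := by
    rwa [← IsLocalRing.notMem_maximalIdeal, ← PadicInt.ker_toZMod]
  have hinv : ((↑u⁻¹ : ℤ_[p]) : ℚ_[p]) = (q' : ℚ_[p])⁻¹ := by
    rw [← hx']
    refine eq_inv_of_mul_eq_one_right ?_
    rw [← PadicInt.coe_mul, u.mul_inv, PadicInt.coe_one]
  refine ⟨x * ↑u⁻¹, by simp [hx, hinv, div_eq_mul_inv], ?_⟩
  rw [map_mul, div_eq_mul_inv, ← map_units_inv]

theorem cast_num_eq (h : HasResidue p q r) : (q.num : ZMod p) = r * q.den := by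
  obtain ⟨x, hx, rfl⟩ := h
  have hnum : x * q.den = q.num := PadicInt.ext (by push_cast [hx]; exact_mod_cast q.mul_den_eq_num)
  rw [← map_intCast PadicInt.toZMod, ← hnum, map_mul, map_natCast]

theorem ne_zero (h : HasResidue p q r) (hr : r ≠ 0) : q ≠ 0 := by
  rintro rfl
  obtain ⟨x, hx, rfl⟩ := h
  have hx0 : x = 0 := PadicInt.coe_eq_zero.1 (by simpa using hx)
  exact hr (by rw [hx0, map_zero])

theorem not_dvd_den (h : HasResidue p q r) : ¬ p ∣ q.den := by
  intro hden
  have hnum : (p : ℤ) ∣ q.num := by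
    rw [← ZMod.intCast_zmod_eq_zero_iff_dvd, h.cast_num_eq,
      (ZMod.natCast_eq_zero_iff _ _).2 hden, mul_zero]
  exact (Fact.out : p.Prime).ne_one
    (Nat.eq_one_of_dvd_coprimes q.reduced (Int.natCast_dvd.1 hnum) hden)

theorem dvd_num_sub {k : ℤ} (h : HasResidue p q k) : (p : ℤ) ∣ q.num - k * q.den := by
  rw [← ZMod.intCast_zmod_eq_zero_iff_dvd]
  push_cast
  rw [h.cast_num_eq, sub_self]

end HasResidue

theorem somos5_of_somos4 {R : Type*} [CommRing R] [IsDomain R] {b c : ℕ → R}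
    (hb : ∀ n, b n ≠ 0) (hc : ∀ n, c (n + 3) = c n)
    (hrec : ∀ n, b (n + 4) * b n = b (n + 3) * b (n + 1) - c (n + 4) * b (n + 2) ^ 2)
    (h0 : b 5 * b 0 = c 6 * (b 4 * b 1) + b 3 * b 2) (n : ℕ) :
    b (n + 5) * b n = c (n + 6) * (b (n + 4) * b (n + 1)) + b (n + 3) * b (n + 2) := by
  induction n with
  | zero => exact h0
  | succ n ih =>
    have h₁ : b (n + 5) * b (n + 1) = b (n + 4) * b (n + 2) - c (n + 5) * b (n + 3) ^ 2 :=
      hrec (n + 1)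
    have h₂ : b (n + 6) * b (n + 2) = b (n + 5) * b (n + 3) - c (n + 6) * b (n + 4) ^ 2 :=
      hrec (n + 2)
    rw [show n + 1 + 6 = n + 4 + 3 by ring, hc]
    -- multiplying the relations at `n` and `n + 1` and substituting `ih` eliminates `b n`
    have hprod : (b (n + 3) * b (n + 1) - c (n + 4) * b (n + 2) ^ 2) *
        (b (n + 4) * b (n + 2) - c (n + 5) * b (n + 3) ^ 2) =
        (c (n + 6) * (b (n + 4) * b (n + 1)) + b (n + 3) * b (n + 2)) *
          (b (n + 4) * b (n + 1)) := by
      rw [← hrec n, ← h₁, ← ih]; ring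
    apply mul_right_cancel₀ (mul_ne_zero (hb (n + 2)) (hb (n + 1)))
    linear_combination
      b (n + 1) ^ 2 * h₂ + (b (n + 3) * b (n + 1) - c (n + 4) * b (n + 2) ^ 2) * h₁ + hprod

def echoCoeff (n : ℕ) : ℕ := if 3 ∣ n then 3 else 1

theorem echoCoeff_add_three (n : ℕ) : echoCoeff (n + 3) = echoCoeff n := by
  simp [echoCoeff, Nat.dvd_add_self_right]

theorem echo_add_four (n : ℕ) :
    echo (n + 4) =
      (echo (n + 3) * echo (n + 1) - echoCoeff (n + 4) * echo (n + 2) ^ 2) / echo n := by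
  rw [echo, echoCoeff]
  split_ifs <;> norm_num

def echoModFive (n : ℕ) : ZMod 5 :=
  ([1, 1, 2, 1, 2, 3, 3, 2, 1, 2, 1, 1, 4, 4, 3, 4, 3, 2, 2, 3, 4, 3, 4, 4] : List (ZMod 5)).getD
    (n % 24) 0

theorem echoModFive_ne_zero (n : ℕ) : echoModFive n ≠ 0 := by
  have h : ∀ j < 24, echoModFive j ≠ 0 := by decide
  simpa [echoModFive] using h (n % 24) (Nat.mod_lt _ (by norm_num))

theorem echoModFive_recurrence (n : ℕ) :
    echoModFive (n + 4) * echoModFive n =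
      echoModFive (n + 3) * echoModFive (n + 1) - echoCoeff (n + 4) * echoModFive (n + 2) ^ 2 := by
  have h : ∀ j < 24, echoModFive (j + 4) * echoModFive j =
      echoModFive (j + 3) * echoModFive (j + 1) - echoCoeff (j + 4) * echoModFive (j + 2) ^ 2 := by
    decide
  have hc : echoCoeff (n % 24 + 4) = echoCoeff (n + 4) := by
    simp only [echoCoeff, show 3 ∣ n % 24 + 4 ↔ 3 ∣ n + 4 by omega]
  simpa only [echoModFive, Nat.mod_add_mod, Nat.mod_mod, hc] using
    h (n % 24) (Nat.mod_lt _ (by norm_num))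

theorem hasResidue_echo_add_four {p : ℕ} [Fact p.Prime] {n : ℕ} {r₀ r₁ r₂ r₃ r₄ : ZMod p}
    (h₀ : HasResidue p (echo n) r₀) (h₁ : HasResidue p (echo (n + 1)) r₁)
    (h₂ : HasResidue p (echo (n + 2)) r₂) (h₃ : HasResidue p (echo (n + 3)) r₃) (hr₀ : r₀ ≠ 0)
    (hr₄ : r₄ * r₀ = r₃ * r₁ - echoCoeff (n + 4) * r₂ ^ 2) :
    HasResidue p (echo (n + 4)) r₄ := by
  rw [echo_add_four, eq_div_of_mul_eq hr₀ hr₄]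
  exact ((h₃.mul h₁).sub ((HasResidue.natCast _).mul (h₂.pow 2))).div h₀ hr₀

instance fact_prime_five : Fact (Nat.Prime 5) := ⟨by norm_num⟩

theorem hasResidue_echo_five (n : ℕ) : HasResidue 5 (echo n) (echoModFive n) := by
  induction n using Nat.strong_induction_on with
  | _ n ih =>
    match n with
    | 0 | 1 | 3 => simpa [echo, echoModFive] using HasResidue.natCast (p := 5) 1
    | 2 => simpa [echo, echoModFive] using HasResidue.natCast (p := 5) 2
    | n + 4 =>
      exact hasResidue_echo_add_four (ih n (by omega)) (ih (n + 1) (by omega))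
        (ih (n + 2) (by omega)) (ih (n + 3) (by omega)) (echoModFive_ne_zero n)
        (echoModFive_recurrence n)

theorem echo_ne_zero (n : ℕ) : echo n ≠ 0 :=
  (hasResidue_echo_five n).ne_zero (echoModFive_ne_zero n)

theorem echo_somos5 (n : ℕ) :
    echo (n + 5) * echo n =
      echoCoeff (n + 6) * (echo (n + 4) * echo (n + 1)) + echo (n + 3) * echo (n + 2) := by
  refine somos5_of_somos4 (c := fun n => (echoCoeff n : ℚ)) echo_ne_zero
    (fun n => by simp only [echoCoeff_add_three]) (fun n => ?_) ?_ n
  · rw [echo_add_four, div_mul_cancel₀ _ (echo_ne_zero n)]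
  · norm_num [echo_add_four, echo, echoCoeff]

theorem echo_add_five (n : ℕ) :
    echo (n + 5) =
      (echoCoeff (n + 6) * (echo (n + 4) * echo (n + 1)) + echo (n + 3) * echo (n + 2)) / echo n :=
  eq_div_of_mul_eq (echo_ne_zero n) (echo_somos5 n)

theorem hasResidue_echo_add_five {p : ℕ} [Fact p.Prime] {n : ℕ} {r₀ r₁ r₂ r₃ r₄ r₅ : ZMod p}
    (h₀ : HasResidue p (echo n) r₀) (h₁ : HasResidue p (echo (n + 1)) r₁)
    (h₂ : HasResidue p (echo (n + 2)) r₂) (h₃ : HasResidue p (echo (n + 3)) r₃)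
    (h₄ : HasResidue p (echo (n + 4)) r₄) (hr₀ : r₀ ≠ 0)
    (hr₅ : r₅ * r₀ = echoCoeff (n + 6) * (r₄ * r₁) + r₃ * r₂) :
    HasResidue p (echo (n + 5)) r₅ := by
  rw [echo_add_five, eq_div_of_mul_eq hr₀ hr₅]
  exact (((HasResidue.natCast _).mul (h₄.mul h₁)).add (h₃.mul h₂)).div h₀ hr₀

def echoModThree (n : ℕ) : ZMod 3 := rseq (n % 9)

theorem echoModThree_recurrence (n : ℕ) (hn : echoModThree n ≠ 0) :
    echoModThree (n + 4) * echoModThree n =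
      echoModThree (n + 3) * echoModThree (n + 1) -
        echoCoeff (n + 4) * echoModThree (n + 2) ^ 2 := by
  have h : ∀ j < 9, echoModThree j ≠ 0 → echoModThree (j + 4) * echoModThree j =
      echoModThree (j + 3) * echoModThree (j + 1) -
        echoCoeff (j + 4) * echoModThree (j + 2) ^ 2 := by
    decide
  have hc : echoCoeff (n % 9 + 4) = echoCoeff (n + 4) := by
    simp only [echoCoeff, show 3 ∣ n % 9 + 4 ↔ 3 ∣ n + 4 by omega]
  simpa only [echoModThree, Nat.mod_add_mod, Nat.mod_mod, hc] using
    h (n % 9) (Nat.mod_lt _ (by norm_num)) (by simpa only [echoModThree, Nat.mod_mod] using hn)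

theorem echoModThree_somos5 (n : ℕ) (hn : echoModThree (n + 1) = 0) :
    echoModThree n ≠ 0 ∧ echoModThree (n + 5) * echoModThree n =
      echoCoeff (n + 6) * (echoModThree (n + 4) * echoModThree (n + 1)) +
        echoModThree (n + 3) * echoModThree (n + 2) := by
  have h : ∀ j < 9, echoModThree (j + 1) = 0 → echoModThree j ≠ 0 ∧
      echoModThree (j + 5) * echoModThree j =
        echoCoeff (j + 6) * (echoModThree (j + 4) * echoModThree (j + 1)) +
          echoModThree (j + 3) * echoModThree (j + 2) := by
    decide
  have hc : echoCoeff (n % 9 + 6) = echoCoeff (n + 6) := by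
    simp only [echoCoeff, show 3 ∣ n % 9 + 6 ↔ 3 ∣ n + 6 by omega]
  simpa only [echoModThree, Nat.mod_add_mod, Nat.mod_mod, hc] using
    h (n % 9) (Nat.mod_lt _ (by norm_num)) (by simpa only [echoModThree, Nat.mod_add_mod] using hn)

theorem hasResidue_echo_three (n : ℕ) : HasResidue 3 (echo n) (echoModThree n) := by
  induction n using Nat.strong_induction_on with
  | _ n ih =>
    match n with
    | 0 | 1 | 3 => simpa [echo, echoModThree, rseq] using HasResidue.natCast (p := 3) 1
    | 2 => simpa [echo, echoModThree, rseq] using HasResidue.natCast (p := 3) 2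
    | n + 4 =>
      by_cases hn : echoModThree n = 0
      · obtain ⟨m, rfl⟩ : ∃ m, n = m + 1 :=
          Nat.exists_eq_succ_of_ne_zero (by rintro rfl; exact absurd hn (by decide))
        obtain ⟨hm, hr⟩ := echoModThree_somos5 m hn
        exact hasResidue_echo_add_five (ih m (by omega)) (ih (m + 1) (by omega))
          (ih (m + 2) (by omega)) (ih (m + 3) (by omega)) (ih (m + 4) (by omega)) hm hr
      · exact hasResidue_echo_add_four (ih n (by omega)) (ih (n + 1) (by omega))
          (ih (n + 2) (by omega)) (ih (n + 3) (by omega)) hn (echoModThree_recurrence n hn)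

/-- The denominator of each term of the ECHO sequence is coprime to 3, and the sequence is
periodic modulo 3 with the pattern (1, 1, 2, 1, 0, 2, 1, 2, 2) starting at multiples of 9. -/
theorem echo_periodic_mod_three :
    (∀ n : ℕ, ¬ (3 ∣ (echo n).den)) ∧
      ∀ n : ℕ, 9 ∣ n → ∀ i : ℕ, i ≤ 8 →
        (3 : ℤ) ∣ (echo (n + i)).num - rseq i * ((echo (n + i)).den : ℤ) := by
  refine ⟨fun n => (hasResidue_echo_three n).not_dvd_den, fun n hn i hi => ?_⟩
  have h := hasResidue_echo_three (n + i)
  rw [echoModThree, show (n + i) % 9 = i by omega] at h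
  exact h.dvd_num_sub
end

section
/- For every n ≥ 0 the rational number b n is an integer (its denominator is 1), and for every n ≥ 3 the integer b n is coprime to each of b (n-1), b (n-2), and b (n-3) (i.e., the gcd of the corresponding numerators is 1). -/
private def cE (n : ℕ) : ℤ := if 3 ∣ n then 3 else 1

/-- Integer companion sequence, defined by the associated Somos-5 recurrence. -/
private def aE : ℕ → ℤ
  | 0 => 1
  | 1 => 1
  | 2 => 2
  | 3 => 1
  | 4 => -3
  | n + 5 => (cE n * aE (n + 4) * aE (n + 1) + aE (n + 3) * aE (n + 2)) / aE n

private lemma cE_add_three (n : ℕ) : cE (n + 3) = cE n := by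
  unfold cE
  congr 1
  simp [Nat.dvd_add_self_right]

/-- Pattern of `aE` modulo 4 (period 15). -/
private def q4 (n : ℕ) : ZMod 4 :=
  [1, 1, 2, 1, 1, 1, 3, 2, 1, 3, 3, 3, 2, 3, 3].getD (n % 15) 0

/-- Pattern of `aE` modulo 3 (period 9). -/
private def q3 (n : ℕ) : ZMod 3 :=
  [1, 1, 2, 1, 0, 2, 1, 2, 2].getD (n % 9) 0

private def cz4 (n : ℕ) : ZMod 4 := if 3 ∣ n then 3 else 1
private def cz3 (n : ℕ) : ZMod 3 := if 3 ∣ n then 3 else 1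

private lemma castc4 (n : ℕ) : ((cE n : ℤ) : ZMod 4) = cz4 n := by
  unfold cE cz4; split_ifs <;> norm_num

private lemma castc3 (n : ℕ) : ((cE n : ℤ) : ZMod 3) = cz3 n := by
  unfold cE cz3; split_ifs <;> norm_num

private lemma q4_congr {x y : ℕ} (h : x % 15 = y % 15) : q4 x = q4 y := by
  simp [q4, h]

private lemma q3_congr {x y : ℕ} (h : x % 9 = y % 9) : q3 x = q3 y := by
  simp [q3, h]

private lemma cz4_congr {x y : ℕ} (h : x % 3 = y % 3) : cz4 x = cz4 y := by
  unfold cz4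
  by_cases hx : 3 ∣ x
  · rw [if_pos hx, if_pos (by omega)]
  · rw [if_neg hx, if_neg (by omega)]

private lemma cz3_congr {x y : ℕ} (h : x % 3 = y % 3) : cz3 x = cz3 y := by
  unfold cz3
  by_cases hx : 3 ∣ x
  · rw [if_pos hx, if_pos (by omega)]
  · rw [if_neg hx, if_neg (by omega)]

private lemma q4_ne_zero (n : ℕ) : q4 n ≠ 0 := by
  have key : ∀ s : Fin 15, q4 s.val ≠ 0 := by decide
  have := key ⟨n % 15, by omega⟩
  rwa [q4_congr (by omega : (n % 15) % 15 = n % 15)] at this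

private lemma q3_ne_zero {n : ℕ} (h : n % 3 ≠ 1) : q3 n ≠ 0 := by
  have key : ∀ s : Fin 9, s.val % 3 ≠ 1 → q3 s.val ≠ 0 := by decide
  have := key ⟨n % 9, by omega⟩ (show (n % 9) % 3 ≠ 1 by omega)
  rwa [q3_congr (by omega : (n % 9) % 9 = n % 9)] at this

private lemma aE_ne_zero {n : ℕ} (h : (aE n : ZMod 4) = q4 n) : aE n ≠ 0 := by
  intro h0
  rw [h0] at h
  exact q4_ne_zero n (by simpa using h.symm)

private lemma aE_coprime_three {n : ℕ} (h : (aE n : ZMod 3) = q3 n) (hn : n % 3 ≠ 1) :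
    IsCoprime (aE n) 3 := by
  refine ((Int.prime_three.coprime_iff_not_dvd).mpr ?_).symm
  intro hd
  have : (aE n : ZMod 3) = 0 :=
    (ZMod.intCast_zmod_eq_zero_iff_dvd (aE n) 3).mpr (by exact_mod_cast hd)
  rw [h] at this
  exact q3_ne_zero hn this

/-- Determination of the next value modulo 4. -/
private lemma m4step (r : ℕ) (z : ZMod 4)
    (h1 : z * q4 r = cz4 r * q4 (r + 4) * q4 (r + 1) + q4 (r + 3) * q4 (r + 2))
    (h2 : z * q4 (r + 1) = q4 (r + 4) * q4 (r + 2) - cz4 (r + 5) * q4 (r + 3) ^ 2) :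
    z = q4 (r + 5) := by
  have key : ∀ s : Fin 15, ∀ z : ZMod 4,
      z * q4 s.val = cz4 s.val * q4 (s.val + 4) * q4 (s.val + 1)
        + q4 (s.val + 3) * q4 (s.val + 2) →
      z * q4 (s.val + 1) = q4 (s.val + 4) * q4 (s.val + 2)
        - cz4 (s.val + 5) * q4 (s.val + 3) ^ 2 →
      z = q4 (s.val + 5) := by decide
  have e0 : q4 r = q4 (r % 15) := q4_congr (by omega)
  have e1 : q4 (r + 1) = q4 (r % 15 + 1) := q4_congr (by omega)
  have e2 : q4 (r + 2) = q4 (r % 15 + 2) := q4_congr (by omega)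
  have e3 : q4 (r + 3) = q4 (r % 15 + 3) := q4_congr (by omega)
  have e4 : q4 (r + 4) = q4 (r % 15 + 4) := q4_congr (by omega)
  have e5 : q4 (r + 5) = q4 (r % 15 + 5) := q4_congr (by omega)
  have c0 : cz4 r = cz4 (r % 15) := cz4_congr (by omega)
  have c5 : cz4 (r + 5) = cz4 (r % 15 + 5) := cz4_congr (by omega)
  rw [e0, e1, e2, e3, e4, c0] at h1
  rw [e1, e2, e3, e4, c5] at h2
  rw [e5]
  exact key ⟨r % 15, by omega⟩ z h1 h2

/-- Determination of the next value modulo 3. -/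
private lemma m3step (r : ℕ) (z : ZMod 3)
    (h1 : z * q3 r = cz3 r * q3 (r + 4) * q3 (r + 1) + q3 (r + 3) * q3 (r + 2))
    (h2 : z * q3 (r + 1) = q3 (r + 4) * q3 (r + 2) - cz3 (r + 5) * q3 (r + 3) ^ 2) :
    z = q3 (r + 5) := by
  have key : ∀ s : Fin 9, ∀ z : ZMod 3,
      z * q3 s.val = cz3 s.val * q3 (s.val + 4) * q3 (s.val + 1)
        + q3 (s.val + 3) * q3 (s.val + 2) →
      z * q3 (s.val + 1) = q3 (s.val + 4) * q3 (s.val + 2)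
        - cz3 (s.val + 5) * q3 (s.val + 3) ^ 2 →
      z = q3 (s.val + 5) := by decide
  have e0 : q3 r = q3 (r % 9) := q3_congr (by omega)
  have e1 : q3 (r + 1) = q3 (r % 9 + 1) := q3_congr (by omega)
  have e2 : q3 (r + 2) = q3 (r % 9 + 2) := q3_congr (by omega)
  have e3 : q3 (r + 3) = q3 (r % 9 + 3) := q3_congr (by omega)
  have e4 : q3 (r + 4) = q3 (r % 9 + 4) := q3_congr (by omega)
  have e5 : q3 (r + 5) = q3 (r % 9 + 5) := q3_congr (by omega)
  have c0 : cz3 r = cz3 (r % 9) := cz3_congr (by omega)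
  have c5 : cz3 (r + 5) = cz3 (r % 9 + 5) := cz3_congr (by omega)
  rw [e0, e1, e2, e3, e4, c0] at h1
  rw [e1, e2, e3, e4, c5] at h2
  rw [e5]
  exact key ⟨r % 9, by omega⟩ z h1 h2

/-- The divisibility certificate for the Somos-5 step. -/
private lemma certS5 (p q r s t u v w x y e0 e1 e2 : ℤ)
    (h1 : y * t = e2 * x * u + w * v)
    (h2 : x * s = e1 * w * t + v * u)
    (h3 : w * r = e0 * v * s + u * t)
    (h4 : v * q = e2 * u * r + t * s)
    (h5 : u * p = e1 * t * q + s * r) :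
    u ∣ q * r ^ 2 * s * t * (e0 * y * v + x * w) := by
  refine ⟨r ^ 2 * t ^ 2 * u ^ 2 * e2 - 2 * r ^ 2 * t ^ 2 * u ^ 2 * e0 * e1 * e2 ^ 2
      + r ^ 3 * u ^ 2 * v * e0 * e2 ^ 2 + 2 * q * t ^ 4 * u * e0 * e1 ^ 2 * e2
      + p * t ^ 3 * u ^ 2 - 2 * p * t ^ 3 * u ^ 2 * e0 * e1 * e2
      + 2 * p * s * t ^ 2 * u * v * e0 - p * s * t ^ 2 * u * v * e0 ^ 2 * e1 * e2
      + p * s ^ 2 * t * v ^ 2 * e0 ^ 2 + 3 * p * r * t * u ^ 2 * v * e0 * e2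
      - p * r * t * u ^ 2 * v * e0 ^ 2 * e1 * e2 ^ 2 + p ^ 2 * u ^ 2 * v ^ 2 * e0 ^ 2 * e2, ?_⟩
  linear_combination (q * r ^ 2 * s * v * e0) * h1
    + (q * r ^ 2 * u * v * e0 * e2 + q * r ^ 2 * t * w) * h2
    + (q * t ^ 3 * u * e1 + q * s * t ^ 2 * v * e0 * e1 + q * r * t * u * v
        + q * r * t * u * v * e0 * e1 * e2 + q * r * t ^ 2 * w * e1 + q * r * s * v ^ 2 * e0) * h3
    + (r * t ^ 2 * u ^ 2 - 2 * r * t ^ 2 * u ^ 2 * e0 * e1 * e2 + 2 * r * s * t * u * v * e0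
        + r * s ^ 2 * v ^ 2 * e0 ^ 2 + r ^ 2 * u ^ 2 * v * e0 * e2
        - p * t * u ^ 2 * v * e0 ^ 2 * e1 * e2) * h4
    - (t ^ 3 * u ^ 2 - 2 * t ^ 3 * u ^ 2 * e0 * e1 * e2 + 2 * s * t ^ 2 * u * v * e0
        + s ^ 2 * t * v ^ 2 * e0 ^ 2 + 3 * r * t * u ^ 2 * v * e0 * e2
        + r * s * u * v ^ 2 * e0 ^ 2 * e2 + p * u ^ 2 * v ^ 2 * e0 ^ 2 * e2) * h5

/-- The full invariant package. -/
private def Pk (n : ℕ) : Prop :=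
  ((aE n : ZMod 4) = q4 n) ∧
  ((aE n : ZMod 3) = q3 n) ∧
  (aE (n + 5) * aE n = cE n * aE (n + 4) * aE (n + 1) + aE (n + 3) * aE (n + 2)) ∧
  (aE (n + 4) * aE n = aE (n + 3) * aE (n + 1) - cE (n + 4) * aE (n + 2) ^ 2) ∧
  IsCoprime (aE (n + 1)) (aE n) ∧ IsCoprime (aE (n + 2)) (aE n) ∧
  IsCoprime (aE (n + 3)) (aE n) ∧ IsCoprime (aE (n + 4)) (aE n)

private lemma pk : ∀ n, Pk n := by
  intro n
  induction n using Nat.strong_induction_on with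
  | _ n ih =>
    match n, ih with
    | 0, _ =>
      refine ⟨by decide, by decide, by decide, by decide, ?_, ?_, ?_, ?_⟩ <;>
        exact Int.isCoprime_iff_gcd_eq_one.mpr (by decide)
    | 1, _ =>
      refine ⟨by decide, by decide, by decide, by decide, ?_, ?_, ?_, ?_⟩ <;>
        exact Int.isCoprime_iff_gcd_eq_one.mpr (by decide)
    | 2, _ =>
      refine ⟨by decide, by decide, by decide, by decide, ?_, ?_, ?_, ?_⟩ <;>
        exact Int.isCoprime_iff_gcd_eq_one.mpr (by decide)
    | 3, _ =>
      refine ⟨by decide, by decide, by decide, by decide, ?_, ?_, ?_, ?_⟩ <;>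
        exact Int.isCoprime_iff_gcd_eq_one.mpr (by decide)
    | 4, _ =>
      refine ⟨by decide, by decide, by decide, by decide, ?_, ?_, ?_, ?_⟩ <;>
        exact Int.isCoprime_iff_gcd_eq_one.mpr (by decide)
    | (m + 5), ih => ?_
    obtain ⟨M40, M30, S50, S40, g10, g20, g30, g40⟩ := ih m (by omega)
    obtain ⟨M41, M31, S51, S41, g11, g21, g31, g41⟩ := ih (m + 1) (by omega)
    obtain ⟨M42, M32, S52, S42, g12, g22, g32, g42⟩ := ih (m + 2) (by omega)
    obtain ⟨M43, M33, S53, S43, g13, g23, g33, g43⟩ := ih (m + 3) (by omega)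
    obtain ⟨M44, M34, S54, S44, g14, g24, g34, g44⟩ := ih (m + 4) (by omega)
    -- normalize the index forms
    have hS51 : aE (m + 6) * aE (m + 1)
        = cE (m + 1) * aE (m + 5) * aE (m + 2) + aE (m + 4) * aE (m + 3) := S51
    have hS52 : aE (m + 7) * aE (m + 2)
        = cE (m + 2) * aE (m + 6) * aE (m + 3) + aE (m + 5) * aE (m + 4) := S52
    have hS53 : aE (m + 8) * aE (m + 3)
        = cE m * aE (m + 7) * aE (m + 4) + aE (m + 6) * aE (m + 5) := by
      have h := S53
      rwa [show cE (m + 3) = cE m from cE_add_three m] at h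
    have hS54 : aE (m + 9) * aE (m + 4)
        = cE (m + 1) * aE (m + 8) * aE (m + 5) + aE (m + 7) * aE (m + 6) := by
      have h : aE (m + 9) * aE (m + 4)
          = cE (m + 4) * aE (m + 8) * aE (m + 5) + aE (m + 7) * aE (m + 6) := S54
      rwa [show cE (m + 4) = cE (m + 1) from cE_add_three (m + 1)] at h
    have hS41 : aE (m + 5) * aE (m + 1)
        = aE (m + 4) * aE (m + 2) - cE (m + 5) * aE (m + 3) ^ 2 := S41
    have hS43 : aE (m + 7) * aE (m + 3)
        = aE (m + 6) * aE (m + 4) - cE (m + 1) * aE (m + 5) ^ 2 := by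
      have h : aE (m + 7) * aE (m + 3)
          = aE (m + 6) * aE (m + 4) - cE (m + 7) * aE (m + 5) ^ 2 := S43
      rwa [show cE (m + 7) = cE (m + 4) from cE_add_three (m + 4),
        show cE (m + 4) = cE (m + 1) from cE_add_three (m + 1)] at h
    have hcop1 : IsCoprime (aE (m + 5)) (aE (m + 4)) := g14
    have hcop2 : IsCoprime (aE (m + 5)) (aE (m + 3)) := g23
    have hcop3 : IsCoprime (aE (m + 5)) (aE (m + 2)) := g32
    have hcop4 : IsCoprime (aE (m + 5)) (aE (m + 1)) := g41
    have hnz4 : aE (m + 4) ≠ 0 := aE_ne_zero M44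
    -- Somos-4 relation at m+5
    have hS4 : aE (m + 9) * aE (m + 5)
        = aE (m + 8) * aE (m + 6) - cE (m + 9) * aE (m + 7) ^ 2 := by
      rw [show cE (m + 9) = cE (m + 6) from cE_add_three (m + 6),
        show cE (m + 6) = cE (m + 3) from cE_add_three (m + 3),
        show cE (m + 3) = cE m from cE_add_three m]
      have hc3 : cE (m + 3) = cE m := cE_add_three m
      have key : aE (m + 4) * (aE (m + 9) * aE (m + 5))
          = aE (m + 4) * (aE (m + 8) * aE (m + 6) - cE m * aE (m + 7) ^ 2) := by
        linear_combination aE (m + 5) * hS54 - aE (m + 7) * hS53 + aE (m + 8) * hS43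
      exact mul_left_cancel₀ hnz4 key
    -- Somos-5 relation at m+5 (the divisibility step)
    have hdvd : aE (m + 5) ∣ cE (m + 2) * aE (m + 9) * aE (m + 6) + aE (m + 8) * aE (m + 7) := by
      have hc := certS5 (aE m) (aE (m + 1)) (aE (m + 2)) (aE (m + 3)) (aE (m + 4))
        (aE (m + 5)) (aE (m + 6)) (aE (m + 7)) (aE (m + 8)) (aE (m + 9))
        (cE (m + 2)) (cE m) (cE (m + 1)) hS54 hS53 hS52 hS51 S50
      have hcop : IsCoprime (aE (m + 5)) (aE (m + 1) * aE (m + 2) ^ 2 * aE (m + 3) * aE (m + 4)) :=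
        (((hcop4.mul_right (hcop3.pow_right)).mul_right hcop2).mul_right hcop1)
      exact hcop.dvd_of_dvd_mul_left hc
    have hS5 : aE (m + 10) * aE (m + 5)
        = cE (m + 5) * aE (m + 9) * aE (m + 6) + aE (m + 8) * aE (m + 7) := by
      rw [show cE (m + 5) = cE (m + 2) from cE_add_three (m + 2)]
      have hdef : aE (m + 10)
          = (cE (m + 5) * aE (m + 9) * aE (m + 6) + aE (m + 8) * aE (m + 7)) / aE (m + 5) := rfl
      rw [hdef, show cE (m + 5) = cE (m + 2) from cE_add_three (m + 2)]
      exact Int.ediv_mul_cancel hdvd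
    -- mod 4 invariant
    have hM4 : (aE (m + 5) : ZMod 4) = q4 (m + 5) := by
      have h1 : (aE (m + 5) : ZMod 4) * q4 m
          = cz4 m * q4 (m + 4) * q4 (m + 1) + q4 (m + 3) * q4 (m + 2) := by
        have := congrArg (fun z : ℤ => (z : ZMod 4)) S50
        push_cast at this
        rw [castc4, M40, M41, M42, M43, M44] at this
        linear_combination this
      have h2 : (aE (m + 5) : ZMod 4) * q4 (m + 1)
          = q4 (m + 4) * q4 (m + 2) - cz4 (m + 5) * q4 (m + 3) ^ 2 := by
        have := congrArg (fun z : ℤ => (z : ZMod 4)) hS41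
        push_cast at this
        rw [castc4, M41, M42, M43, M44] at this
        linear_combination this
      exact m4step m _ h1 h2
    -- mod 3 invariant
    have hM3 : (aE (m + 5) : ZMod 3) = q3 (m + 5) := by
      have h1 : (aE (m + 5) : ZMod 3) * q3 m
          = cz3 m * q3 (m + 4) * q3 (m + 1) + q3 (m + 3) * q3 (m + 2) := by
        have := congrArg (fun z : ℤ => (z : ZMod 3)) S50
        push_cast at this
        rw [castc3, M30, M31, M32, M33, M34] at this
        linear_combination this
      have h2 : (aE (m + 5) : ZMod 3) * q3 (m + 1)
          = q3 (m + 4) * q3 (m + 2) - cz3 (m + 5) * q3 (m + 3) ^ 2 := by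
        have := congrArg (fun z : ℤ => (z : ZMod 3)) hS41
        push_cast at this
        rw [castc3, M31, M32, M33, M34] at this
        linear_combination this
      exact m3step m _ h1 h2
    -- distance-1 coprimality at m+5
    have hg1 : IsCoprime (aE (m + 6)) (aE (m + 5)) := by
      have base : IsCoprime (aE (m + 5)) (aE (m + 4) * aE (m + 3)) := hcop1.mul_right hcop2
      have h' := base.add_mul_right_right (cE (m + 1) * aE (m + 2))
      rw [show aE (m + 4) * aE (m + 3) + cE (m + 1) * aE (m + 2) * aE (m + 5)
          = aE (m + 6) * aE (m + 1) from by linear_combination -hS51] at h'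
      exact h'.of_mul_right_left.symm
    -- coprime with 3-coefficient helper (only needed when 3 ∣ the relevant index)
    have hcopc : ∀ k : ℕ, (3 ∣ k → (m + 5) % 3 ≠ 1) → IsCoprime (aE (m + 5)) (cE k) := by
      intro k hk
      unfold cE
      split_ifs with h3
      · exact aE_coprime_three hM3 (hk h3)
      · exact isCoprime_one_right
    -- distance-2 coprimality at m+5
    have hg2 : IsCoprime (aE (m + 7)) (aE (m + 5)) := by
      have base : IsCoprime (aE (m + 5)) (cE (m + 2) * aE (m + 6) * aE (m + 3)) :=
        ((hcopc (m + 2) (by omega)).mul_right hg1.symm).mul_right hcop2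
      have h' := base.add_mul_right_right (aE (m + 4))
      rw [show cE (m + 2) * aE (m + 6) * aE (m + 3) + aE (m + 4) * aE (m + 5)
          = aE (m + 7) * aE (m + 2) from by linear_combination -hS52] at h'
      exact h'.of_mul_right_left.symm
    -- distance-3 coprimality at m+5
    have hg3 : IsCoprime (aE (m + 8)) (aE (m + 5)) := by
      have base : IsCoprime (aE (m + 5)) (cE m * aE (m + 7) * aE (m + 4)) :=
        ((hcopc m (by omega)).mul_right hg2.symm).mul_right hcop1
      have h' := base.add_mul_right_right (aE (m + 6))
      rw [show cE m * aE (m + 7) * aE (m + 4) + aE (m + 6) * aE (m + 5)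
          = aE (m + 8) * aE (m + 3) from by linear_combination -hS53] at h'
      exact h'.of_mul_right_left.symm
    -- distance-4 coprimality at m+5
    have hg4 : IsCoprime (aE (m + 9)) (aE (m + 5)) := by
      have base : IsCoprime (aE (m + 5)) (aE (m + 7) * aE (m + 6)) :=
        hg2.symm.mul_right hg1.symm
      have h' := base.add_mul_right_right (cE (m + 1) * aE (m + 8))
      rw [show aE (m + 7) * aE (m + 6) + cE (m + 1) * aE (m + 8) * aE (m + 5)
          = aE (m + 9) * aE (m + 4) from by linear_combination -hS54] at h'
      exact h'.of_mul_right_left.symm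
    exact ⟨hM4, hM3, hS5, hS4, hg1, hg2, hg3, hg4⟩

private lemma echo_eq (n : ℕ) : echo n = (aE n : ℚ) := by
  induction n using Nat.strong_induction_on with
  | _ n ih =>
    match n, ih with
    | 0, _ => norm_num [echo, aE]
    | 1, _ => norm_num [echo, aE]
    | 2, _ => norm_num [echo, aE]
    | 3, _ => norm_num [echo, aE]
    | (k + 4), ih =>
      have h0 := ih k (by omega)
      have h1 := ih (k + 1) (by omega)
      have h2 := ih (k + 2) (by omega)
      have h3 := ih (k + 3) (by omega)
      have hnz : (aE k : ℚ) ≠ 0 := Int.cast_ne_zero.mpr (aE_ne_zero (pk k).1)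
      have hS4 := (pk k).2.2.2.1
      have hdef : echo (k + 4)
          = (echo (k + 3) * echo (k + 1)
              - (if 3 ∣ (k + 4) then 3 else 1) * echo (k + 2) ^ 2) / echo k := rfl
      rw [hdef, h0, h1, h2, h3]
      rw [div_eq_iff hnz]
      have hc : ((if 3 ∣ (k + 4) then (3 : ℚ) else 1)) = ((cE (k + 4) : ℤ) : ℚ) := by
        unfold cE; split_ifs <;> norm_num
      rw [hc]
      exact_mod_cast hS4.symm

/-- Every term of the ECHO sequence is an integer, and consecutive terms (up to distance 3)
are coprime. -/
theorem echo_integral_and_coprime :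
    (∀ n : ℕ, (echo n).den = 1) ∧
      ∀ n : ℕ, 3 ≤ n →
        Int.gcd (echo n).num (echo (n - 1)).num = 1 ∧
          Int.gcd (echo n).num (echo (n - 2)).num = 1 ∧
            Int.gcd (echo n).num (echo (n - 3)).num = 1 := by
  constructor
  · intro n
    rw [echo_eq n]
    exact Rat.den_intCast _
  · intro n hn
    obtain ⟨m, rfl⟩ : ∃ m, n = m + 3 := ⟨n - 3, by omega⟩
    have e1 : m + 3 - 1 = m + 2 := rfl
    have e2 : m + 3 - 2 = m + 1 := rfl
    have e3 : m + 3 - 3 = m := rfl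
    rw [e1, e2, e3, echo_eq (m + 3), echo_eq (m + 2), echo_eq (m + 1), echo_eq m,
      Rat.num_intCast, Rat.num_intCast, Rat.num_intCast, Rat.num_intCast]
    refine ⟨?_, ?_, ?_⟩
    · exact Int.isCoprime_iff_gcd_eq_one.mp (pk (m + 2)).2.2.2.2.1
    · exact Int.isCoprime_iff_gcd_eq_one.mp (pk (m + 1)).2.2.2.2.2.1
    · exact Int.isCoprime_iff_gcd_eq_one.mp (pk m).2.2.2.2.2.2.1
end

section
/- Fix k ≥ 3 and r with 3 ≤ r ≤ k. If (v, M) ∈ AGL₂(ℤ/2^kℤ) satisfies π_{k,r}((v, M)) = identity (i.e., v ≡ 0 and M ≡ I modulo 2^r), then (v, M) lies in the Frattini subgroup of AGL₂(ℤ/2^kℤ). -/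
open Matrix

/-- AGL₂ over ℤ/mℤ, realized as the subgroup of GL₃ of matrices whose bottom row is (0, 0, 1). -/
def agl (m : ℕ) : Subgroup (GL (Fin 3) (ZMod m)) where
  carrier := {g | ∀ j : Fin 3,
    (g : Matrix (Fin 3) (Fin 3) (ZMod m)) 2 j = (1 : Matrix (Fin 3) (Fin 3) (ZMod m)) 2 j}
  one_mem' := fun _ => rfl
  mul_mem' := by
    intro a b ha hb j
    simp only [Units.val_mul, Matrix.mul_apply]
    calc ∑ k, (a : Matrix (Fin 3) (Fin 3) (ZMod m)) 2 k *
          (b : Matrix (Fin 3) (Fin 3) (ZMod m)) k j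
        = ∑ k, (1 : Matrix (Fin 3) (Fin 3) (ZMod m)) 2 k *
            (b : Matrix (Fin 3) (Fin 3) (ZMod m)) k j := by
          exact Finset.sum_congr rfl fun k _ => by rw [ha k]
      _ = (b : Matrix (Fin 3) (Fin 3) (ZMod m)) 2 j := by
          simp [Matrix.one_apply, ite_mul]
      _ = (1 : Matrix (Fin 3) (Fin 3) (ZMod m)) 2 j := hb j
  inv_mem' := by
    intro a ha j
    have key : ((a * a⁻¹ : GL (Fin 3) (ZMod m)) : Matrix (Fin 3) (Fin 3) (ZMod m)) 2 j =
        ((a⁻¹ : GL (Fin 3) (ZMod m)) : Matrix (Fin 3) (Fin 3) (ZMod m)) 2 j := by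
      simp only [Units.val_mul, Matrix.mul_apply]
      calc ∑ k, (a : Matrix (Fin 3) (Fin 3) (ZMod m)) 2 k *
            ((a⁻¹ : GL (Fin 3) (ZMod m)) : Matrix (Fin 3) (Fin 3) (ZMod m)) k j
          = ∑ k, (1 : Matrix (Fin 3) (Fin 3) (ZMod m)) 2 k *
              ((a⁻¹ : GL (Fin 3) (ZMod m)) : Matrix (Fin 3) (Fin 3) (ZMod m)) k j := by
            exact Finset.sum_congr rfl fun k _ => by rw [ha k]
        _ = _ := by simp [Matrix.one_apply, ite_mul]
    rw [show (a * a⁻¹ : GL (Fin 3) (ZMod m)) = 1 from mul_inv_cancel a] at key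
    exact key.symm

/-- Reduction homomorphism on GL₃ induced by the ring map ℤ/nℤ → ℤ/mℤ. -/
def redGL {m n : ℕ} (h : m ∣ n) : GL (Fin 3) (ZMod n) →* GL (Fin 3) (ZMod m) :=
  Units.map (RingHom.toMonoidHom (RingHom.mapMatrix (ZMod.castHom h (ZMod m))))

lemma redGL_mem {m n : ℕ} (h : m ∣ n) {g : GL (Fin 3) (ZMod n)} (hg : g ∈ agl n) :
    redGL h g ∈ agl m := by
  intro j
  have : ((redGL h g : GL (Fin 3) (ZMod m)) : Matrix (Fin 3) (Fin 3) (ZMod m)) 2 j =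
      ZMod.castHom h (ZMod m) ((g : Matrix (Fin 3) (Fin 3) (ZMod n)) 2 j) := rfl
  rw [this, hg j, Matrix.one_apply, apply_ite (ZMod.castHom h (ZMod m)), _root_.map_one, _root_.map_zero,
    Matrix.one_apply]

/-- Reduction homomorphism AGL₂(ℤ/nℤ) → AGL₂(ℤ/mℤ). -/
def red {m n : ℕ} (h : m ∣ n) : ↥(agl n) →* ↥(agl m) :=
  MonoidHom.codRestrict ((redGL h).comp (agl n).subtype) (agl m)
    (fun g => redGL_mem h g.2)

/-- A subgroup of AGL₂(ℤ/2^kℤ) is kinetic if it surjects onto GL₂(ℤ/2^kℤ) via the linear-part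
projection and onto AGL₂(ℤ/2ℤ) via reduction. -/
def Kinetic {k : ℕ} (h2 : (2 : ℕ) ∣ 2 ^ k) (G : Subgroup ↥(agl (2 ^ k))) : Prop :=
  (∀ M : GL (Fin 2) (ZMod (2 ^ k)), ∃ g ∈ G, ∀ i j : Fin 2,
      ((g : GL (Fin 3) (ZMod (2 ^ k))) : Matrix (Fin 3) (Fin 3) (ZMod (2 ^ k)))
        i.castSucc j.castSucc = (M : Matrix (Fin 2) (Fin 2) (ZMod (2 ^ k))) i j) ∧
  (∀ t : ↥(agl 2), ∃ g ∈ G, red h2 g = t)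

/-- The first generator of H₂: the pair ((1,2), [[2,1],[3,0]]). -/
def genA : GL (Fin 3) (ZMod 4) :=
  ⟨!![2, 1, 1; 3, 0, 2; 0, 0, 1], !![0, 3, 2; 1, 2, 3; 0, 0, 1], by decide, by decide⟩

/-- The second generator of H₂: the pair ((3,3), [[2,3],[1,3]]). -/
def genB : GL (Fin 3) (ZMod 4) :=
  ⟨!![2, 3, 3; 1, 3, 3; 0, 0, 1], !![1, 3, 0; 1, 2, 3; 0, 0, 1], by decide, by decide⟩

lemma genA_mem : genA ∈ agl 4 := by
  show ∀ j : Fin 3, (genA : Matrix (Fin 3) (Fin 3) (ZMod 4)) 2 j =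
    (1 : Matrix (Fin 3) (Fin 3) (ZMod 4)) 2 j
  decide

lemma genB_mem : genB ∈ agl 4 := by
  show ∀ j : Fin 3, (genB : Matrix (Fin 3) (Fin 3) (ZMod 4)) 2 j =
    (1 : Matrix (Fin 3) (Fin 3) (ZMod 4)) 2 j
  decide

/-- The subgroup H₂ of AGL₂(ℤ/4ℤ). -/
def H2 : Subgroup ↥(agl 4) :=
  Subgroup.closure {⟨genA, genA_mem⟩, ⟨genB, genB_mem⟩}

/-- The subgroup H_k of AGL₂(ℤ/2^kℤ), the preimage of H₂ under reduction mod 4. -/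
def Hk {k : ℕ} (h4 : (4 : ℕ) ∣ 2 ^ k) : Subgroup ↥(agl (2 ^ k)) :=
  Subgroup.comap (red h4) H2
namespace AGLFrattini

open Subgroup

variable {k : ℕ}

/-- The underlying matrix of an element of `agl (2^k)`. -/
def mat (g : ↥(agl (2 ^ k))) : Matrix (Fin 3) (Fin 3) (ZMod (2 ^ k)) :=
  ((g : GL (Fin 3) (ZMod (2 ^ k))) : Matrix (Fin 3) (Fin 3) (ZMod (2 ^ k)))

lemma mat_mul (g h : ↥(agl (2 ^ k))) : mat (g * h) = mat g * mat h := rfl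

lemma mat_one : mat (1 : ↥(agl (2 ^ k))) = 1 := rfl

/-- `cond j g` means `g ≡ 1` modulo `2^j`, entrywise. -/
def cond (j : ℕ) (g : ↥(agl (2 ^ k))) : Prop :=
  ∀ i l : Fin 3, (2 : ZMod (2 ^ k)) ^ j ∣
    (mat g i l - (1 : Matrix (Fin 3) (Fin 3) (ZMod (2 ^ k))) i l)

lemma two_pow_self_eq_zero : (2 : ZMod (2 ^ k)) ^ k = 0 := by
  have h := ZMod.natCast_self (2 ^ k)
  push_cast at h
  exact h

lemma cond_mono {j j' : ℕ} (h : j' ≤ j) {g : ↥(agl (2 ^ k))} (hg : cond j g) : cond j' g :=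
  fun i l => dvd_trans (pow_dvd_pow 2 h) (hg i l)

lemma eq_one_of_cond_k {g : ↥(agl (2 ^ k))} (hg : cond k g) : g = 1 := by
  have hm : mat g = 1 := by
    ext i l
    have := hg i l
    rw [two_pow_self_eq_zero, zero_dvd_iff, sub_eq_zero] at this
    exact this
  exact Subtype.ext (Units.ext hm)

end AGLFrattini
namespace AGLFrattini

open Subgroup

variable {k : ℕ}

lemma castHom_eq_zero_iff {m n : ℕ} [NeZero n] (h : m ∣ n) (x : ZMod n) :
    ZMod.castHom h (ZMod m) x = 0 ↔ ((m : ℕ) : ZMod n) ∣ x := by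
  constructor
  · intro hx
    have hv : ((x.val : ℕ) : ZMod m) = 0 := by
      rw [ZMod.natCast_val, ← ZMod.castHom_apply (h := h), hx]
    rw [ZMod.natCast_eq_zero_iff] at hv
    obtain ⟨t, ht⟩ := hv
    refine ⟨(t : ZMod n), ?_⟩
    have hx' : ((x.val : ℕ) : ZMod n) = x := by
      rw [ZMod.natCast_val, ZMod.cast_id]
    rw [← hx', ht]
    push_cast
    ring
  · rintro ⟨c, rfl⟩
    rw [_root_.map_mul, map_natCast, ZMod.natCast_self, zero_mul]

lemma mem_ker_iff_cond {r : ℕ} (hrk : r ≤ k) (g : ↥(agl (2 ^ k))) :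
    red (pow_dvd_pow 2 hrk) g = 1 ↔ cond r g := by
  have hcast : ∀ i l : Fin 3,
      ((red (pow_dvd_pow 2 hrk) g : GL (Fin 3) (ZMod (2 ^ r))) :
        Matrix (Fin 3) (Fin 3) (ZMod (2 ^ r))) i l =
      ZMod.castHom (pow_dvd_pow 2 hrk) (ZMod (2 ^ r)) (mat g i l) := fun i l => rfl
  constructor
  · intro hg i l
    have h1 : ZMod.castHom (pow_dvd_pow 2 hrk) (ZMod (2 ^ r)) (mat g i l) =
        (1 : Matrix (Fin 3) (Fin 3) (ZMod (2 ^ r))) i l := by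
      rw [← hcast, hg]; rfl
    have h0 : ZMod.castHom (pow_dvd_pow 2 hrk) (ZMod (2 ^ r))
        (mat g i l - (1 : Matrix (Fin 3) (Fin 3) (ZMod (2 ^ k))) i l) = 0 := by
      rw [map_sub, h1]
      rcases eq_or_ne i l with hil | hil
      · subst hil; simp only [Matrix.one_apply_eq, _root_.map_one, sub_self]
      · simp only [Matrix.one_apply_ne hil, map_zero, sub_zero]
    have := (castHom_eq_zero_iff (pow_dvd_pow 2 hrk) _).mp h0
    rwa [Nat.cast_pow, Nat.cast_ofNat] at this
  · intro hg
    apply Subtype.ext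
    apply Units.ext
    ext i l
    have h0 := (castHom_eq_zero_iff (pow_dvd_pow 2 hrk)
      (mat g i l - (1 : Matrix (Fin 3) (Fin 3) (ZMod (2 ^ k))) i l)).mpr
      (by rw [Nat.cast_pow, Nat.cast_ofNat]; exact hg i l)
    rw [map_sub, sub_eq_zero] at h0
    rw [hcast, h0]
    show ZMod.castHom _ (ZMod (2 ^ r)) ((1 : Matrix (Fin 3) (Fin 3) (ZMod (2 ^ k))) i l) =
      (1 : Matrix (Fin 3) (Fin 3) (ZMod (2 ^ r))) i l
    rcases eq_or_ne i l with hil | hil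
    · subst hil; simp only [Matrix.one_apply_eq, _root_.map_one]
    · simp only [Matrix.one_apply_ne hil, map_zero]

lemma dvd_entries_mul_left {x : ZMod (2 ^ k)} {P Q : Matrix (Fin 3) (Fin 3) (ZMod (2 ^ k))}
    (h : ∀ i l, x ∣ Q i l) : ∀ i l, x ∣ (P * Q) i l := by
  intro i l
  rw [Matrix.mul_apply]
  exact Finset.dvd_sum fun m _ => Dvd.dvd.mul_left (h m l) _

lemma dvd_entries_mul {x y : ZMod (2 ^ k)} {P Q : Matrix (Fin 3) (Fin 3) (ZMod (2 ^ k))}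
    (hP : ∀ i l, x ∣ P i l) (hQ : ∀ i l, y ∣ Q i l) : ∀ i l, x * y ∣ (P * Q) i l := by
  intro i l
  rw [Matrix.mul_apply]
  exact Finset.dvd_sum fun m _ => mul_dvd_mul (hP i m) (hQ m l)

lemma dvd_entries_pow {x : ZMod (2 ^ k)} {Q : Matrix (Fin 3) (Fin 3) (ZMod (2 ^ k))}
    (h : ∀ i l, x ∣ Q i l) : ∀ t, ∀ i l, x ^ (t + 1) ∣ (Q ^ (t + 1)) i l := by
  intro t
  induction t with
  | zero => simpa using h
  | succ t ih =>
    have : Q ^ (t + 1 + 1) = Q ^ (t + 1) * Q := pow_succ Q (t + 1)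
    rw [this, pow_succ]
    exact dvd_entries_mul ih h

end AGLFrattini
namespace AGLFrattini

open Subgroup

variable {k : ℕ}

lemma cond_sq {j : ℕ} (hj : 1 ≤ j) {g : ↥(agl (2 ^ k))} (hg : cond j g) :
    cond (j + 1) (g * g) := by
  set A : Matrix (Fin 3) (Fin 3) (ZMod (2 ^ k)) := mat g - 1 with hA
  have hg' : mat g = 1 + A := by rw [hA]; abel
  have hexp : mat (g * g) - 1 = A + A + A * A := by
    rw [mat_mul, hg']; noncomm_ring
  intro i l
  have hentry : mat (g * g) i l - (1 : Matrix (Fin 3) (Fin 3) (ZMod (2 ^ k))) i l =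
      (A + A + A * A) i l := by rw [← hexp, Matrix.sub_apply]
  rw [hentry]
  have h1 : (2 : ZMod (2 ^ k)) ^ (j + 1) ∣ (A + A) i l := by
    rw [Matrix.add_apply, ← two_mul, pow_succ, mul_comm]
    exact mul_dvd_mul dvd_rfl (hg i l)
  have h2 : (2 : ZMod (2 ^ k)) ^ (j + 1) ∣ (A * A) i l := by
    refine dvd_trans (pow_dvd_pow 2 (by omega : j + 1 ≤ j + j)) ?_
    rw [pow_add]
    exact dvd_entries_mul hg hg i l
  rw [Matrix.add_apply]
  exact dvd_add h1 h2

lemma isPGroup_ker (hk2 : 2 ≤ k) :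
    IsPGroup 2 ↥((red (pow_dvd_pow 2 hk2)).ker) := by
  intro x
  refine ⟨k, ?_⟩
  have hc : cond 2 (x : ↥(agl (2 ^ k))) := (mem_ker_iff_cond hk2 _).mp x.2
  have key : ∀ t : ℕ, cond (2 + t) ((x : ↥(agl (2 ^ k))) ^ 2 ^ t) := by
    intro t
    induction t with
    | zero => simpa using hc
    | succ t ih =>
      have h : (x : ↥(agl (2 ^ k))) ^ 2 ^ (t + 1) =
          (x : ↥(agl (2 ^ k))) ^ 2 ^ t * (x : ↥(agl (2 ^ k))) ^ 2 ^ t := by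
        rw [← pow_add]
        congr 1
        omega
      rw [h]
      exact cond_sq (show 1 ≤ 2 + t by omega) ih
  have h2 := cond_mono (show k ≤ 2 + k by omega) (key k)
  have h1 : ((x : ↥(agl (2 ^ k))) ^ 2 ^ k) = 1 := eq_one_of_cond_k h2
  exact Subtype.ext (by simpa using h1)

lemma sq_mem_coatom {P : Type*} [Group P] [Finite P] (hP : IsPGroup 2 P)
    {M : Subgroup P} (hM : IsCoatom M) (x : P) : x * x ∈ M := by
  haveI : Fact (Nat.Prime 2) := ⟨Nat.prime_two⟩
  haveI : Group.IsNilpotent P := hP.isNilpotent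
  haveI hnorm : M.Normal := NormalizerCondition.normal_of_coatom M
    normalizerCondition_of_isNilpotent hM
  have key : ∀ y : P ⧸ M, y * y = 1 := by
    intro y
    by_contra hy
    have hZ : Subgroup.zpowers (y * y) = ⊤ := by
      have hle : M ≤ (Subgroup.zpowers (y * y)).comap (QuotientGroup.mk' M) := by
        intro m hm
        rw [Subgroup.mem_comap]
        have : (QuotientGroup.mk' M) m = 1 := (QuotientGroup.eq_one_iff m).mpr hm
        rw [this]
        exact one_mem _
      rcases eq_or_lt_of_le hle with heq | hlt
      · exfalso
        obtain ⟨w, hw⟩ := QuotientGroup.mk'_surjective M (y * y)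
        have hwmem : w ∈ (Subgroup.zpowers (y * y)).comap (QuotientGroup.mk' M) := by
          rw [Subgroup.mem_comap, hw]
          exact Subgroup.mem_zpowers _
        rw [← heq] at hwmem
        exact hy (hw ▸ (QuotientGroup.eq_one_iff w).mpr hwmem)
      · have htop := hM.2 _ hlt
        have := Subgroup.map_comap_eq_self_of_surjective
          (QuotientGroup.mk'_surjective M) (Subgroup.zpowers (y * y))
        rw [← this, htop]
        exact Subgroup.map_top_of_surjective _ (QuotientGroup.mk'_surjective M)
    obtain ⟨t, ht⟩ := Subgroup.mem_zpowers_iff.mp (hZ ▸ Subgroup.mem_top y)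
    have h1 : y ^ (2 * t - 1) = 1 := by
      have h2 : (y * y) ^ t = y ^ (2 * t) := by
        have hyy : y * y = y ^ (2 : ℤ) := (zpow_two y).symm
        rw [hyy, ← _root_.zpow_mul]
      rw [h2] at ht
      rw [_root_.zpow_sub, ht, zpow_one, mul_inv_cancel]
    have hdvd : (orderOf y : ℤ) ∣ 2 * t - 1 := orderOf_dvd_iff_zpow_eq_one.mpr h1
    obtain ⟨d, hd⟩ := (IsPGroup.iff_orderOf.mp (hP.to_quotient M)) y
    rcases Nat.eq_zero_or_pos d with hd0 | hd1
    · apply hy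
      have : orderOf y = 1 := by rw [hd, hd0, pow_zero]
      have hy1 : y = 1 := orderOf_eq_one_iff.mp this
      rw [hy1, mul_one]
    · have h2dvd : (2 : ℤ) ∣ 2 * t - 1 := by
        refine dvd_trans ?_ hdvd
        rw [hd]
        exact_mod_cast Int.natCast_dvd_natCast.mpr (dvd_pow_self 2 (by omega))
      omega
  have hx := key ((QuotientGroup.mk' M) x)
  rw [← _root_.map_mul] at hx
  exact (QuotientGroup.eq_one_iff _).mp hx

end AGLFrattini
namespace AGLFrattini

open Subgroup

variable {k : ℕ}

/-- The kernel of reduction mod 4. -/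
def Nker (hk2 : 2 ≤ k) : Subgroup ↥(agl (2 ^ k)) := (red (pow_dvd_pow 2 hk2)).ker

/-- The subgroup generated by the squares of elements of `Nker`. -/
def Ssq (hk2 : 2 ≤ k) : Subgroup ↥(agl (2 ^ k)) :=
  Subgroup.closure ((fun n => n * n) '' ((Nker hk2 : Set ↥(agl (2 ^ k)))))

lemma Ssq_le_Nker (hk2 : 2 ≤ k) : Ssq hk2 ≤ Nker hk2 := by
  rw [Ssq, Subgroup.closure_le]
  rintro x ⟨n, hn, rfl⟩
  exact mul_mem hn hn

lemma Ssq_normal (hk2 : 2 ≤ k) : (Ssq hk2).Normal := by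
  constructor
  intro s hs gg
  induction hs using Subgroup.closure_induction with
  | mem x hx =>
    obtain ⟨n, hn, rfl⟩ := hx
    have h : gg * (n * n) * gg⁻¹ = (gg * n * gg⁻¹) * (gg * n * gg⁻¹) := by group
    rw [h]
    exact Subgroup.subset_closure
      ⟨gg * n * gg⁻¹, (MonoidHom.normal_ker _).conj_mem n hn gg, rfl⟩
  | one => simpa using (Ssq hk2).one_mem
  | mul x y hx hy px py =>
    have h : gg * (x * y) * gg⁻¹ = (gg * x * gg⁻¹) * (gg * y * gg⁻¹) := by group
    rw [h]
    exact mul_mem px py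
  | inv x hx px =>
    have h : gg * x⁻¹ * gg⁻¹ = (gg * x * gg⁻¹)⁻¹ := by group
    rw [h]
    exact inv_mem px

lemma mem_Ssq_of_cond (hk2 : 2 ≤ k) :
    ∀ d j, 3 ≤ j → k ≤ j + d → ∀ g : ↥(agl (2 ^ k)), cond j g → g ∈ Ssq hk2 := by
  intro d
  induction d with
  | zero =>
    intro j h3 hkj g hc
    rw [eq_one_of_cond_k (cond_mono (by omega : k ≤ j) hc)]
    exact one_mem _
  | succ d ih =>
    intro j h3 hkj g hc
    set A : Matrix (Fin 3) (Fin 3) (ZMod (2 ^ k)) := mat g - 1 with hAdef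
    have hA : ∀ i l, (2 : ZMod (2 ^ k)) ^ j ∣ A i l := by
      intro i l
      have := hc i l
      rwa [show A i l = mat g i l - (1 : Matrix (Fin 3) (Fin 3) (ZMod (2 ^ k))) i l from rfl]
    have hA2 : ∀ l, A 2 l = 0 := by
      intro l
      show mat g 2 l - (1 : Matrix (Fin 3) (Fin 3) (ZMod (2 ^ k))) 2 l = 0
      rw [sub_eq_zero]
      exact g.2 l
    choose c hcc using hA
    set B : Matrix (Fin 3) (Fin 3) (ZMod (2 ^ k)) :=
      Matrix.of (fun i l => if i = 2 then 0 else 2 ^ (j - 1) * c i l) with hBdef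
    have hBapp : ∀ i l, B i l = if i = 2 then 0 else 2 ^ (j - 1) * c i l := fun i l => rfl
    have hpow : (2 : ZMod (2 ^ k)) * 2 ^ (j - 1) = 2 ^ j := by
      rw [← pow_succ']
      congr 1
      omega
    have hA_eq : ∀ i l, A i l = 2 * B i l := by
      intro i l
      by_cases hi : i = 2
      · rw [hBapp, if_pos hi, mul_zero, hi, hA2 l]
      · rw [hBapp, if_neg hi, ← mul_assoc, hpow, ← hcc i l]
    have hBdvd : ∀ i l, (2 : ZMod (2 ^ k)) ^ (j - 1) ∣ B i l := by
      intro i l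
      rw [hBapp]
      by_cases hi : i = 2
      · rw [if_pos hi]; exact dvd_zero _
      · rw [if_neg hi]; exact Dvd.intro _ rfl
    have hB2 : ∀ i l, (2 : ZMod (2 ^ k)) ∣ B i l := fun i l =>
      dvd_trans (dvd_pow_self 2 (by omega : j - 1 ≠ 0)) (hBdvd i l)
    have hBnil : IsNilpotent B := by
      refine ⟨k, ?_⟩
      ext i l
      have hk1 : k = (k - 1) + 1 := by omega
      have := dvd_entries_pow hB2 (k - 1) i l
      rw [← hk1, two_pow_self_eq_zero, zero_dvd_iff] at this
      rw [this]
      rfl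
    have hu : IsUnit (1 + B) := hBnil.isUnit_one_add
    have hmemagl : hu.unit ∈ agl (2 ^ k) := by
      intro l
      show (1 + B) 2 l = _
      rw [Matrix.add_apply, hBapp, if_pos rfl, add_zero]
    set g' : ↥(agl (2 ^ k)) := ⟨hu.unit, hmemagl⟩ with hg'def
    have hmatg' : mat g' = 1 + B := hu.unit_spec
    have hg'N : g' ∈ Nker hk2 := by
      rw [Nker, MonoidHom.mem_ker, mem_ker_iff_cond hk2]
      intro i l
      have : mat g' i l - (1 : Matrix (Fin 3) (Fin 3) (ZMod (2 ^ k))) i l = B i l := by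
        rw [show mat g' i l = (1 + B) i l from by rw [hmatg'], Matrix.add_apply]
        ring
      rw [this]
      exact dvd_trans (pow_dvd_pow 2 (by omega : 2 ≤ j - 1)) (hBdvd i l)
    have hmatg : mat g = 1 + A := by rw [hAdef]; abel
    have hBBA : B + B = A := by
      ext i l
      rw [Matrix.add_apply, ← two_mul, ← hA_eq]
    have hsq : mat (g' * g') = mat g + B * B := by
      rw [mat_mul, hmatg', hmatg]
      have : (1 + B) * (1 + B) = 1 + (B + B) + B * B := by noncomm_ring
      rw [this, hBBA]
    set w : ↥(agl (2 ^ k)) := (g' * g')⁻¹ * g with hwdef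
    have hw : cond (j + 1) w := by
      have hP : mat ((g' * g')⁻¹) * mat (g' * g') = 1 := by
        rw [← mat_mul, inv_mul_cancel, mat_one]
      rw [hsq, mul_add] at hP
      have hmatw : mat w - 1 = -(mat ((g' * g')⁻¹) * (B * B)) := by
        rw [hwdef, mat_mul, ← hP]
        abel
      intro i l
      have hentry : mat w i l - (1 : Matrix (Fin 3) (Fin 3) (ZMod (2 ^ k))) i l =
          (-(mat ((g' * g')⁻¹) * (B * B))) i l := by rw [← hmatw, Matrix.sub_apply]
      rw [hentry, Matrix.neg_apply]
      rw [dvd_neg]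
      refine dvd_trans (pow_dvd_pow 2 (by omega : j + 1 ≤ (j - 1) + (j - 1))) ?_
      rw [pow_add]
      exact dvd_entries_mul_left (dvd_entries_mul hBdvd hBdvd) i l
    have hwS : w ∈ Ssq hk2 := ih (j + 1) (by omega) (by omega) w hw
    have hgw : g = (g' * g') * w := by rw [hwdef]; group
    rw [hgw]
    exact mul_mem (Subgroup.subset_closure ⟨g', hg'N, rfl⟩) hwS

end AGLFrattini
namespace AGLFrattini

open Subgroup

variable {k : ℕ}

lemma Ssq_le_frattini (hk2 : 2 ≤ k) : Ssq hk2 ≤ frattini ↥(agl (2 ^ k)) := by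
  haveI : NeZero (2 ^ k) := ⟨pow_ne_zero k two_ne_zero⟩
  haveI : Finite ↥(agl (2 ^ k)) := inferInstance
  haveI : (Ssq hk2).Normal := Ssq_normal hk2
  rw [frattini, Order.radical]
  refine le_iInf₂ fun M hM => ?_
  by_contra hSM
  have hlt : M < M ⊔ Ssq hk2 := left_lt_sup.mpr hSM
  have htop : M ⊔ Ssq hk2 = ⊤ := hM.2 _ hlt
  have hdecomp : ∀ n, n ∈ Nker hk2 →
      ∃ m s, m ∈ M ⊓ Nker hk2 ∧ s ∈ Ssq hk2 ∧ m * s = n := by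
    intro n hn
    have hmem : n ∈ (↑(M ⊔ Ssq hk2) : Set ↥(agl (2 ^ k))) := by
      rw [htop]; trivial
    rw [Subgroup.mul_normal] at hmem
    obtain ⟨m, hm, s, hs, hms⟩ := hmem
    refine ⟨m, s, ⟨hm, ?_⟩, hs, hms⟩
    have hmns : m = n * s⁻¹ := by rw [← hms]; group
    rw [hmns]
    exact (Nker hk2).mul_mem hn ((Nker hk2).inv_mem (Ssq_le_Nker hk2 hs))
  set T := (M ⊓ Nker hk2).subgroupOf (Nker hk2) with hTdef
  have hT : T ≠ ⊤ := by
    intro h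
    apply hSM
    refine le_trans (Ssq_le_Nker hk2) ?_
    intro n hn
    have : (⟨n, hn⟩ : ↥(Nker hk2)) ∈ T := h ▸ Subgroup.mem_top _
    exact (Subgroup.mem_subgroupOf.mp this).1
  obtain ⟨M'', hco, hTM⟩ := (eq_top_or_exists_le_coatom T).resolve_left hT
  have hsq : ∀ x : ↥(Nker hk2), x * x ∈ M'' := fun x =>
    sq_mem_coatom (isPGroup_ker hk2) hco x
  have hSM'' : ∀ s (hs : s ∈ Ssq hk2) (hsN : s ∈ Nker hk2),
      (⟨s, hsN⟩ : ↥(Nker hk2)) ∈ M'' := by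
    intro s hs
    induction hs using Subgroup.closure_induction with
    | mem x hx =>
      intro hxN
      obtain ⟨n, hn, rfl⟩ := hx
      have heq : (⟨n * n, hxN⟩ : ↥(Nker hk2)) = ⟨n, hn⟩ * ⟨n, hn⟩ := rfl
      rw [heq]
      exact hsq _
    | one =>
      intro h1
      exact one_mem _
    | mul x y hx hy px py =>
      intro hxy
      have hxN : x ∈ Nker hk2 := Ssq_le_Nker hk2 hx
      have hyN : y ∈ Nker hk2 := Ssq_le_Nker hk2 hy
      have heq : (⟨x * y, hxy⟩ : ↥(Nker hk2)) = ⟨x, hxN⟩ * ⟨y, hyN⟩ := rfl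
      rw [heq]
      exact mul_mem (px hxN) (py hyN)
    | inv x hx px =>
      intro hxi
      have hxN : x ∈ Nker hk2 := Ssq_le_Nker hk2 hx
      have heq : (⟨x⁻¹, hxi⟩ : ↥(Nker hk2)) = (⟨x, hxN⟩ : ↥(Nker hk2))⁻¹ := rfl
      rw [heq]
      exact inv_mem (px hxN)
  apply hco.1
  rw [eq_top_iff]
  rintro ⟨n, hn⟩ -
  obtain ⟨m, s, hmMN, hsS, hms⟩ := hdecomp n hn
  have heq : (⟨n, hn⟩ : ↥(Nker hk2)) = ⟨m, hmMN.2⟩ * ⟨s, Ssq_le_Nker hk2 hsS⟩ :=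
    Subtype.ext hms.symm
  rw [heq]
  exact mul_mem (hTM (Subgroup.mem_subgroupOf.mpr hmMN)) (hSM'' s hsS _)

end AGLFrattini


/-- If an element of AGL₂(ℤ/2^kℤ) is the identity modulo 2^r with 3 ≤ r ≤ k, then it lies in
the Frattini subgroup of AGL₂(ℤ/2^kℤ). -/
theorem mem_frattini_of_congruent_one (k r : ℕ) (hk : 3 ≤ k) (hr : 3 ≤ r) (hrk : r ≤ k)
    (g : ↥(agl (2 ^ k))) (hg : red (pow_dvd_pow 2 hrk) g = 1) :
    g ∈ frattini ↥(agl (2 ^ k)) := by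
  have hk2 : 2 ≤ k := by omega
  have hc : AGLFrattini.cond r g := (AGLFrattini.mem_ker_iff_cond hrk g).mp hg
  exact AGLFrattini.Ssq_le_frattini hk2
    (AGLFrattini.mem_Ssq_of_cond hk2 k r hr (by omega) g hc)
end

section
/- Let k ≥ 2, let M ∈ GL₂(ℤ/4ℤ), and let M' ∈ GL₂(ℤ/2^kℤ) be any lift of M (i.e., M' reduces to M modulo 4). Then the fraction of the image of M' − I lying in V₀₀ is the same at level k as at level 2: |im(M' − I) ∩ V₀₀(k)| · |im(M − I)| = |im(M − I) ∩ V₀₀(2)| · |im(M' − I)|. -/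
open Matrix

/-!
Reduction `ρ : (ℤ/2^k)² → (ℤ/4)²` maps `W' = im(M' − I)` onto `W = im(M − I)`, since `ρ` is
surjective and intertwines `M' − I` with `M − I`; moreover `V₀₀(k) = ρ⁻¹ V₀₀(2)`. The first
isomorphism theorem for `ρ` restricted to `A ∩ ρ⁻¹ B` gives
`|A ∩ ρ⁻¹ B| = |ρ A ∩ B| · |A ∩ ker ρ|` for every subgroup `B`. Applied to `A = W'` with
`B = V₀₀(2)` and with `B` the whole group, both sides of the identity equal
`|W ∩ V₀₀(2)| · |W| · |W' ∩ ker ρ|`.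
-/

namespace AddSubgroup

variable {G H : Type*} [AddGroup G] [AddGroup H]

theorem card_eq_card_ker_mul_card_range (f : G →+ H) :
    Nat.card G = Nat.card f.ker * Nat.card f.range := by
  rw [← f.ker.card_mul_index, index_ker]

theorem card_inf_comap (f : G →+ H) (A : AddSubgroup G) (B : AddSubgroup H) :
    Nat.card ↥(A ⊓ B.comap f) = Nat.card ↥(A.map f ⊓ B) * Nat.card ↥(A ⊓ f.ker) := by
  set C := A ⊓ B.comap f
  have hrange : C.map f = A.map f ⊓ B :=
    SetLike.coe_injective (by simp only [C, coe_map, coe_inf, coe_comap, Set.image_inter_preimage])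
  have hker : f.ker ⊓ C = A ⊓ f.ker := by
    rw [inf_comm, inf_assoc, inf_eq_right.mpr (f.ker_le_comap B)]
  rw [card_eq_card_ker_mul_card_range (f.domRestrict C), AddMonoidHom.domRestrict_range,
    AddMonoidHom.ker_domRestrict, ← card_map_of_injective C.subtype_injective,
    addSubgroupOf_map_subtype, hrange, hker, mul_comm]

theorem card_eq_card_map_mul_card_inf_ker (f : G →+ H) (A : AddSubgroup G) :
    Nat.card A = Nat.card (A.map f) * Nat.card ↥(A ⊓ f.ker) := by
  simpa using card_inf_comap f A ⊤

end AddSubgroup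

def redVec (ι : Type*) {m n : ℕ} (h : m ∣ n) : (ι → ZMod n) →+ (ι → ZMod m) :=
  (ZMod.castHom h (ZMod m)).toAddMonoidHom.compLeft ι

section redVec

variable {ι : Type*} {m n : ℕ}

@[simp]
theorem redVec_apply (h : m ∣ n) (v : ι → ZMod n) (i : ι) :
    redVec ι h v i = ZMod.castHom h (ZMod m) (v i) :=
  rfl

theorem redVec_surjective (h : m ∣ n) : Function.Surjective (redVec ι h) :=
  (ZMod.castHom_surjective h).comp_left

theorem redVec_comp {d : ℕ} (hm : m ∣ n) (hn : n ∣ d) :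
    (redVec ι hm).comp (redVec ι hn) = redVec ι (hm.trans hn) := by
  ext v i
  simp only [AddMonoidHom.comp_apply, redVec_apply, ← RingHom.comp_apply, ZMod.castHom_comp]

theorem coe_ker_redVec (h : m ∣ n) :
    ((redVec ι h).ker : Set (ι → ZMod n)) = {v | ∀ i, ZMod.castHom h (ZMod m) (v i) = 0} := by
  ext v
  simp [funext_iff]

theorem redVec_image_range_mulVec [Fintype ι] {κ : Type*} (h : m ∣ n)
    (A : Matrix κ ι (ZMod n)) :
    redVec κ h '' Set.range (A *ᵥ ·) = Set.range (A.map (ZMod.castHom h (ZMod m)) *ᵥ ·) := by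
  have hcomm : redVec κ h ∘ (A *ᵥ ·) = (A.map (ZMod.castHom h (ZMod m)) *ᵥ ·) ∘ redVec ι h := by
    ext v i
    exact RingHom.map_mulVec (ZMod.castHom h (ZMod m)) A v i
  rw [← Set.range_comp, hcomm, (redVec_surjective h).range_comp]

end redVec

/-- The fraction of the image of M′ − I lying in V₀₀ is the same at level k as at level 2,
for any lift M′ ∈ GL₂(ℤ/2^kℤ) of M ∈ GL₂(ℤ/4ℤ). -/
theorem lift_fraction_eq (k : ℕ) (hk : 2 ≤ k) (M : GL (Fin 2) (ZMod 4))
    (M' : GL (Fin 2) (ZMod (2 ^ k)))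
    (hlift : ∀ i j : Fin 2,
      ZMod.castHom (show (4 : ℕ) ∣ 2 ^ k by exact (pow_dvd_pow 2 hk : 2 ^ 2 ∣ 2 ^ k)) (ZMod 4)
        ((M' : Matrix (Fin 2) (Fin 2) (ZMod (2 ^ k))) i j) =
      (M : Matrix (Fin 2) (Fin 2) (ZMod 4)) i j) :
    ∀ W' W : Set _,
      W' = Set.range (fun x : Fin 2 → ZMod (2 ^ k) =>
        ((M' : Matrix (Fin 2) (Fin 2) (ZMod (2 ^ k))) - 1) *ᵥ x) →
      W = Set.range (fun x : Fin 2 → ZMod 4 =>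
        ((M : Matrix (Fin 2) (Fin 2) (ZMod 4)) - 1) *ᵥ x) →
      (W' ∩ {v : Fin 2 → ZMod (2 ^ k) | ∀ i : Fin 2,
          ZMod.castHom (dvd_pow_self 2 (show k ≠ 0 by omega)) (ZMod 2) (v i) = 0}).ncard *
        W.ncard =
      (W ∩ {v : Fin 2 → ZMod 4 | ∀ i : Fin 2,
          ZMod.castHom (show (2 : ℕ) ∣ 4 by norm_num) (ZMod 2) (v i) = 0}).ncard *
        W'.ncard := by
  rintro W' W rfl rfl
  have h4 : 4 ∣ 2 ^ k := pow_dvd_pow 2 hk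
  have h24 : 2 ∣ 4 := by norm_num
  set ρ := redVec (Fin 2) h4
  set V := (redVec (Fin 2) h24).ker
  set A := (mulVecLin ((M' : Matrix (Fin 2) (Fin 2) (ZMod (2 ^ k))) - 1)).toAddMonoidHom.range
  have hA : Set.range (((M' : Matrix (Fin 2) (Fin 2) (ZMod (2 ^ k))) - 1) *ᵥ ·) = A := by
    rw [AddMonoidHom.coe_range]
    rfl
  have hmap : ((M' : Matrix (Fin 2) (Fin 2) (ZMod (2 ^ k))) - 1).map (ZMod.castHom h4 (ZMod 4)) =
      (M : Matrix (Fin 2) (Fin 2) (ZMod 4)) - 1 := by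
    rw [Matrix.map_sub _ (map_sub _), Matrix.map_one _ (map_zero _) (map_one _)]
    congr 1
    ext i j
    exact hlift i j
  have hW : Set.range (((M : Matrix (Fin 2) (Fin 2) (ZMod 4)) - 1) *ᵥ ·) = A.map ρ := by
    rw [AddSubgroup.coe_map, ← hA, redVec_image_range_mulVec, hmap]
  have hVk : {v : Fin 2 → ZMod (2 ^ k) | ∀ i : Fin 2,
      ZMod.castHom (dvd_pow_self 2 (show k ≠ 0 by omega)) (ZMod 2) (v i) = 0} = V.comap ρ := by
    rw [AddMonoidHom.comap_ker, redVec_comp, coe_ker_redVec]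
  rw [hA, hW, hVk, ← coe_ker_redVec h24, ← AddSubgroup.coe_inf, ← AddSubgroup.coe_inf]
  simp only [← Nat.card_coe_set_eq, SetLike.coe_sort_coe]
  rw [AddSubgroup.card_inf_comap, AddSubgroup.card_eq_card_map_mul_card_inf_ker ρ A, inf_comm]
  ring
end
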